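/- Let r = (r₁,r₂) ∈ ℚ²∖ℤ² and γ = [[a,b],[c,d]] ∈ SL₂(ℤ). Then for all τ ∈ ℍ, f_r(γτ) = f_{ᵗγ r}(τ), where ᵗγ r = (a r₁ + c r₂, b r₁ + d r₂); that is, the Fricke function satisfies f_r ∘ γ = f_{(a r₁ + c r₂,\; b r₁ + d r₂)} as functions on ℍ. -/

import Mathlib

/-!
With `j = cτ + d`, right multiplication of row vectors by `γ` permutes `ℤ² ∖ 0` and gives
`L_{γτ} = j⁻¹ L_τ`. Reindexing the lattice sums along this permutation (which needs no
convergence, since `tsum` is invariant under bijections) shows that `g₂, g₃, Δ, ℘` scale with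
weights `4, 6, 12, 2`, while `r₁ γτ + r₂ = j⁻¹ ((ᵗγ r)₁ τ + (ᵗγ r)₂)`. The weights cancel in `f_r`.
-/

open Complex UpperHalfPlane Matrix MatrixGroups CongruenceSubgroup
open scoped UpperHalfPlane Manifold Real

noncomputable section

/-- `N·τ` as a point of the upper half-plane (junk value `τ` if `N = 0`). -/
def hsmul (N : ℕ) (τ : UpperHalfPlane) : UpperHalfPlane :=
  if hN : 0 < N then
    ⟨(N : ℂ) * τ, by
      have h0 : (0 : ℝ) < (N : ℝ) := by exact_mod_cast hN
      simpa [Complex.mul_im] using mul_pos h0 τ.2⟩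
  else τ

/-- The Siegel function `g_r(τ)` given by its infinite product expansion. -/
def siegel (r : ℚ × ℚ) (τ : ℍ) : ℂ :=
  -Complex.exp ((Real.pi : ℂ) * Complex.I * (((r.1 : ℂ) ^ 2 - (r.1 : ℂ) + 1 / 6) * τ)) *
    Complex.exp ((Real.pi : ℂ) * Complex.I * (r.2 : ℂ) * ((r.1 : ℂ) - 1)) *
    (1 - Complex.exp (2 * (Real.pi : ℂ) * Complex.I * ((r.1 : ℂ) * τ + (r.2 : ℂ)))) *
    ∏' n : ℕ,
      ((1 - Complex.exp (2 * (Real.pi : ℂ) * Complex.I *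
          (((n : ℂ) + 1 + (r.1 : ℂ)) * τ + (r.2 : ℂ)))) *
       (1 - Complex.exp (2 * (Real.pi : ℂ) * Complex.I *
          (((n : ℂ) + 1 - (r.1 : ℂ)) * τ - (r.2 : ℂ)))))

/-- The lattice point `ω = m·τ + n` attached to a pair `(m,n) ∈ ℤ²`. -/
def lat (τ : ℍ) (p : ℤ × ℤ) : ℂ := (p.1 : ℂ) * τ + (p.2 : ℂ)

/-- `g₂(τ) = 60 ∑_{ω ∈ L_τ ∖ {0}} ω⁻⁴`. -/
def g2C (τ : ℍ) : ℂ := 60 * ∑' p : {p : ℤ × ℤ // p ≠ 0}, ((lat τ p.1) ^ 4)⁻¹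

/-- `g₃(τ) = 140 ∑_{ω ∈ L_τ ∖ {0}} ω⁻⁶`. -/
def g3C (τ : ℍ) : ℂ := 140 * ∑' p : {p : ℤ × ℤ // p ≠ 0}, ((lat τ p.1) ^ 6)⁻¹

/-- The discriminant `Δ(τ) = g₂(τ)³ - 27 g₃(τ)²`. -/
def discC (τ : ℍ) : ℂ := g2C τ ^ 3 - 27 * g3C τ ^ 2

/-- The Weierstrass `℘`-function relative to the lattice `L_τ = ℤτ + ℤ`. -/
def wpC (z : ℂ) (τ : ℍ) : ℂ :=
  (z ^ 2)⁻¹ + ∑' p : {p : ℤ × ℤ // p ≠ 0}, (((z - lat τ p.1) ^ 2)⁻¹ - ((lat τ p.1) ^ 2)⁻¹)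

/-- The Fricke function `f_r(τ)`. -/
def fricke (r : ℚ × ℚ) (τ : ℍ) : ℂ :=
  -(2 ^ 7 * 3 ^ 5) * (g2C τ * g3C τ / discC τ) * wpC ((r.1 : ℂ) * τ + (r.2 : ℂ)) τ

/-- The elliptic modular `j`-invariant. -/
def jinv (τ : ℍ) : ℂ := 1728 * g2C τ ^ 3 / discC τ

/-- The Dedekind eta function. -/
def etaC (τ : ℍ) : ℂ :=
  (Real.sqrt (2 * Real.pi) : ℂ) * Complex.exp (2 * (Real.pi : ℂ) * Complex.I / 16) *
    Complex.exp (2 * (Real.pi : ℂ) * Complex.I * τ / 24) *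
    ∏' n : ℕ, (1 - Complex.exp (2 * (Real.pi : ℂ) * Complex.I * ((n : ℂ) + 1) * τ))

/-- `r ∈ ℚ² ∖ ℤ²`. -/
def NonIntegral (r : ℚ × ℚ) : Prop := ¬ ∃ a b : ℤ, r = ((a : ℚ), (b : ℚ))

/-- `r ∈ (1/N)ℤ²`. -/
def InDen (N : ℕ) (r : ℚ × ℚ) : Prop := ∃ a b : ℤ, r = ((a : ℚ) / N, (b : ℚ) / N)

/-- Membership in `Γ^1(N)`: `a ≡ d ≡ 1` and `b ≡ 0 (mod N)`. -/
def GammaUpper (N : ℕ) (γ : SL(2, ℤ)) : Prop :=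
  ((γ 0 0 : ℤ) : ZMod N) = 1 ∧ ((γ 1 1 : ℤ) : ZMod N) = 1 ∧ ((γ 0 1 : ℤ) : ZMod N) = 0

/-- The transpose action `ᵗγ r = (a r₁ + c r₂, b r₁ + d r₂)` of `γ = [[a,b],[c,d]]`. -/
def tAct (γ : SL(2, ℤ)) (r : ℚ × ℚ) : ℚ × ℚ :=
  ((γ 0 0 : ℚ) * r.1 + (γ 1 0 : ℚ) * r.2, (γ 0 1 : ℚ) * r.1 + (γ 1 1 : ℚ) * r.2)

/-- The power `q^{n/d} = e^{2πi(n/d)τ}`. -/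
def qpow (d : ℕ) (n : ℤ) (τ : ℍ) : ℂ :=
  Complex.exp (2 * (Real.pi : ℂ) * Complex.I * ((n : ℂ) / (d : ℂ)) * τ)

/-- `h` is a weakly holomorphic modular function for `Γ₁(N)` with rational
Fourier coefficients: holomorphic on `ℍ`, `Γ₁(N)`-invariant, with a convergent
`q`-expansion at `i∞` having rational coefficients, and meromorphic at every cusp. -/
def IsWeaklyHolo1 (N : ℕ) (h : ℍ → ℂ) : Prop :=
  MDifferentiable 𝓘(ℂ) 𝓘(ℂ) h ∧
  (∀ γ ∈ Gamma1 N, ∀ τ : ℍ, h (γ • τ) = h τ) ∧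
  (∃ n₀ : ℤ, ∃ c : ℕ → ℚ,
    ∀ τ : ℍ, HasSum (fun n : ℕ => (c n : ℂ) * qpow 1 (n₀ + n) τ) (h τ)) ∧
  (∀ γ : SL(2, ℤ), ∃ n₀ : ℤ, ∃ c : ℕ → ℂ,
    ∀ τ : ℍ, HasSum (fun n : ℕ => c n * qpow N (n₀ + n) τ) (h (γ • τ)))

/-- `h` is a weakly holomorphic modular function for `Γ^1(N)` with rational
Fourier coefficients (the expansion at `i∞` being in powers of `q^{1/N}`). -/
def IsWeaklyHoloUp (N : ℕ) (h : ℍ → ℂ) : Prop :=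
  MDifferentiable 𝓘(ℂ) 𝓘(ℂ) h ∧
  (∀ γ : SL(2, ℤ), GammaUpper N γ → ∀ τ : ℍ, h (γ • τ) = h τ) ∧
  (∃ n₀ : ℤ, ∃ c : ℕ → ℚ,
    ∀ τ : ℍ, HasSum (fun n : ℕ => (c n : ℂ) * qpow N (n₀ + n) τ) (h τ)) ∧
  (∀ γ : SL(2, ℤ), ∃ n₀ : ℤ, ∃ c : ℕ → ℂ,
    ∀ τ : ℍ, HasSum (fun n : ℕ => c n * qpow N (n₀ + n) τ) (h (γ • τ)))

/-- The Weierstrass-unit generator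
`f^1_{m,N} = (f_{(1/N,0)} - f_{(1/m,0)})/(f_{(2/m,0)} - f_{(1/m,0)})`. -/
def fUnit (m N : ℕ) (τ : ℍ) : ℂ :=
  (fricke ((1 : ℚ) / N, 0) τ - fricke ((1 : ℚ) / m, 0) τ) /
    (fricke ((2 : ℚ) / m, 0) τ - fricke ((1 : ℚ) / m, 0) τ)

def rowMulEquiv (γ : SL(2, ℤ)) : ℤ × ℤ ≃+ ℤ × ℤ where
  toFun p := (γ 0 0 * p.1 + γ 1 0 * p.2, γ 0 1 * p.1 + γ 1 1 * p.2)
  invFun p := (γ 1 1 * p.1 - γ 1 0 * p.2, γ 0 0 * p.2 - γ 0 1 * p.1)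
  left_inv p := by
    have hdet := Matrix.det_fin_two (γ : Matrix (Fin 2) (Fin 2) ℤ) ▸ γ.det_coe
    exact Prod.ext (by linear_combination p.1 * hdet) (by linear_combination p.2 * hdet)
  right_inv p := by
    have hdet := Matrix.det_fin_two (γ : Matrix (Fin 2) (Fin 2) ℤ) ▸ γ.det_coe
    exact Prod.ext (by linear_combination p.1 * hdet) (by linear_combination p.2 * hdet)
  map_add' p q := by ext <;> dsimp only [Prod.fst_add, Prod.snd_add] <;> ring

theorem AddEquiv.tsum_subtype_ne_zero_comp {M N α : Type*} [AddZeroClass M] [AddZeroClass N]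
    [AddCommMonoid α] [TopologicalSpace α] (e : M ≃+ N) (f : N → α) :
    ∑' p : {p : M // p ≠ 0}, f (e p) = ∑' q : {q : N // q ≠ 0}, f q :=
  (e.toEquiv.subtypeEquiv fun _ => (EmbeddingLike.map_ne_zero_iff (f := e)).symm).tsum_eq (f ·.1)

section ModularTransformation

variable (γ : SL(2, ℤ)) (τ : ℍ)

open ModularGroup

theorem coe_smul_eq_div_denom :
    ((γ • τ : ℍ) : ℂ) = ((γ 0 0 : ℂ) * τ + γ 0 1) / denom γ τ := by
  rw [coe_specialLinearGroup_apply, denom_apply]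
  simp

theorem lat_smul (p : ℤ × ℤ) : lat (γ • τ) p = lat τ (rowMulEquiv γ p) / denom γ τ := by
  have hj := denom_ne_zero γ τ
  rw [lat, lat, coe_smul_eq_div_denom, eq_div_iff hj, add_mul, mul_assoc, div_mul_cancel₀ _ hj,
    denom_apply]
  simp only [rowMulEquiv, AddEquiv.coe_mk, Equiv.coe_fn_mk]
  push_cast
  ring

theorem tsum_lat_smul (f : ℂ → ℂ) :
    ∑' p : {p : ℤ × ℤ // p ≠ 0}, f (lat (γ • τ) p) =
      ∑' p : {p : ℤ × ℤ // p ≠ 0}, f (lat τ p / denom γ τ) := by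
  simp only [lat_smul]
  exact (rowMulEquiv γ).tsum_subtype_ne_zero_comp fun q => f (lat τ q / denom γ τ)

theorem tsum_inv_pow_lat_smul (k : ℕ) :
    ∑' p : {p : ℤ × ℤ // p ≠ 0}, (lat (γ • τ) p ^ k)⁻¹ =
      denom γ τ ^ k * ∑' p : {p : ℤ × ℤ // p ≠ 0}, (lat τ p ^ k)⁻¹ := by
  rw [tsum_lat_smul γ τ fun ω => (ω ^ k)⁻¹, ← tsum_mul_left]
  congr 1 with p
  rw [div_pow, inv_div, div_eq_mul_inv]

theorem g2C_smul : g2C (γ • τ) = denom γ τ ^ 4 * g2C τ := by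
  rw [g2C, g2C, tsum_inv_pow_lat_smul]
  ring

theorem g3C_smul : g3C (γ • τ) = denom γ τ ^ 6 * g3C τ := by
  rw [g3C, g3C, tsum_inv_pow_lat_smul]
  ring

theorem discC_smul : discC (γ • τ) = denom γ τ ^ 12 * discC τ := by
  rw [discC, discC, g2C_smul, g3C_smul]
  ring

theorem wpC_div_denom_smul (z : ℂ) :
    wpC (z / denom γ τ) (γ • τ) = denom γ τ ^ 2 * wpC z τ := by
  have hj := denom_ne_zero γ τ
  rw [wpC, wpC, tsum_lat_smul γ τ fun ω => ((z / denom γ τ - ω) ^ 2)⁻¹ - (ω ^ 2)⁻¹, mul_add,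
    ← tsum_mul_left]
  congr 1
  · field_simp
  · congr 1 with p
    field_simp

theorem g2C_mul_g3C_div_discC_smul :
    g2C (γ • τ) * g3C (γ • τ) / discC (γ • τ) = g2C τ * g3C τ / discC τ / denom γ τ ^ 2 := by
  have hj := denom_ne_zero γ τ
  rw [g2C_smul, g3C_smul, discC_smul, mul_mul_mul_comm, mul_div_mul_comm,
    div_eq_inv_mul _ (denom γ τ ^ 2)]
  congr 1
  field_simp

theorem rat_mul_smul_add_eq_div_denom (r : ℚ × ℚ) :
    (r.1 : ℂ) * (γ • τ : ℍ) + r.2 = ((tAct γ r).1 * τ + (tAct γ r).2) / denom γ τ := by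
  have hj := denom_ne_zero γ τ
  rw [coe_smul_eq_div_denom, eq_div_iff hj, add_mul, mul_assoc, div_mul_cancel₀ _ hj,
    denom_apply, tAct]
  push_cast
  ring

end ModularTransformation

theorem statement3_general (r : ℚ × ℚ) (γ : SL(2, ℤ)) :
    ∀ τ : ℍ, fricke r (γ • τ) = fricke (tAct γ r) τ := by
  intro τ
  rw [fricke, fricke, rat_mul_smul_add_eq_div_denom, wpC_div_denom_smul, g2C_mul_g3C_div_discC_smul]
  field_simp [denom_ne_zero γ τ]

/-- the Fricke function satisfies `f_r ∘ γ = f_{ᵗγ r}`. -/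
theorem statement3 (r : ℚ × ℚ) (hr : NonIntegral r) (γ : SL(2, ℤ)) :
    ∀ τ : ℍ, fricke r (γ • τ) = fricke (tAct γ r) τ :=
  statement3_general r γ
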